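/- For the phase b(r,θ,r',θ',r̃) = r(1 - r̃ cos(θ-ω)) - r'(1 - r̃ cos(θ'-ω)) - r̃ α, with fixed ω, α ∈ ℝ, a point with r, r', r̃ > 0 is a critical point of b (all five partial derivatives vanish) if and only if r̃ = 1, θ ≡ ω, θ' ≡ ω (mod 2π), and r = r' - α. -/

import Mathlib

open scoped Real
open Real

/-
For `r, r', r̃ > 0` the `θ`- and `θ'`-derivatives vanish exactly when `sin (θ - ω) = sin (θ' - ω) = 0`, and then the
`r`- and `r'`-derivatives force `r̃ cos (θ - ω) = r̃ cos (θ' - ω) = 1`; as `cos = ±1` at zeros of `sin`,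
positivity of `r̃` leaves only `cos = 1` and `r̃ = 1`. The `r̃`-derivative then reads `r' - r - α = 0`.
-/

noncomputable def phase (ω α r θ r' θ' rt : ℝ) : ℝ :=
  r * (1 - rt * cos (θ - ω)) - r' * (1 - rt * cos (θ' - ω)) - rt * α

section PartialDerivatives

variable (ω α r θ r' θ' rt : ℝ)

lemma deriv_phase_r : deriv (fun x => phase ω α x θ r' θ' rt) r = 1 - rt * cos (θ - ω) := by
  simp [phase]

lemma deriv_phase_θ : deriv (fun x => phase ω α r x r' θ' rt) θ = r * (rt * sin (θ - ω)) := by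
  simp [phase]

lemma deriv_phase_r' :
    deriv (fun x => phase ω α r θ x θ' rt) r' = -(1 - rt * cos (θ' - ω)) := by
  simp [phase]

lemma deriv_phase_θ' :
    deriv (fun x => phase ω α r θ r' x rt) θ' = -(r' * (rt * sin (θ' - ω))) := by
  simp [phase]

lemma deriv_phase_rt :
    deriv (fun x => phase ω α r θ r' θ' x) rt = r' * cos (θ' - ω) - r * cos (θ - ω) - α := by
  have affine : (fun x => phase ω α r θ r' θ' x)
      = fun x => x * (r' * cos (θ' - ω) - r * cos (θ - ω) - α) + (r - r') := by
    funext x; simp only [phase]; ring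
  simp [affine]

end PartialDerivatives

lemma sin_eq_zero_and_mul_cos_eq_one_iff {t x : ℝ} (ht : 0 < t) :
    sin x = 0 ∧ t * cos x = 1 ↔ t = 1 ∧ cos x = 1 := by
  rw [sin_eq_zero_iff_cos_eq]
  constructor
  · rintro ⟨hc | hc, h⟩ <;> rw [hc] at h
    · exact ⟨by simpa using h, hc⟩
    · linarith
  · rintro ⟨rfl, hc⟩
    exact ⟨Or.inl hc, by simp [hc]⟩

lemma cos_sub_eq_one_iff (θ ω : ℝ) : cos (θ - ω) = 1 ↔ ∃ n : ℤ, θ = ω + n * (2 * π) := by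
  rw [cos_eq_one_iff]
  refine exists_congr fun n => ?_
  constructor <;> intro h <;> linarith

theorem critical_points_of_5d_phase (ω α : ℝ)
    (b : ℝ → ℝ → ℝ → ℝ → ℝ → ℝ)
    (hb : ∀ r θ r' θ' rt,
      b r θ r' θ' rt = r * (1 - rt * Real.cos (θ - ω))
        - r' * (1 - rt * Real.cos (θ' - ω)) - rt * α) :
    ∀ r θ r' θ' rt : ℝ, 0 < r → 0 < r' → 0 < rt →
      ((deriv (fun x => b x θ r' θ' rt) r = 0 ∧
        deriv (fun x => b r x r' θ' rt) θ = 0 ∧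
        deriv (fun x => b r θ x θ' rt) r' = 0 ∧
        deriv (fun x => b r θ r' x rt) θ' = 0 ∧
        deriv (fun x => b r θ r' θ' x) rt = 0) ↔
      (rt = 1 ∧ (∃ n : ℤ, θ = ω + n * (2 * π)) ∧
        (∃ n : ℤ, θ' = ω + n * (2 * π)) ∧ r = r' - α)) := by
  intro r θ r' θ' rt hr hr' hrt
  obtain rfl : b = phase ω α := by
    funext r θ r' θ' rt
    exact hb r θ r' θ' rt
  rw [deriv_phase_r, deriv_phase_θ, deriv_phase_r', deriv_phase_θ', deriv_phase_rt,
    ← cos_sub_eq_one_iff, ← cos_sub_eq_one_iff]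
  have key (x : ℝ) := sin_eq_zero_and_mul_cos_eq_one_iff (x := x) hrt
  constructor
  · rintro ⟨hr_crit, hθ_crit, hr'_crit, hθ'_crit, hrt_crit⟩
    obtain ⟨rfl, hc⟩ := (key (θ - ω)).1
      ⟨by simpa [hr.ne', hrt.ne'] using hθ_crit, by linarith⟩
    obtain ⟨-, hc'⟩ := (key (θ' - ω)).1
      ⟨by simpa [hr'.ne', hrt.ne'] using hθ'_crit, by linarith⟩
    rw [hc, hc'] at hrt_crit
    exact ⟨rfl, hc, hc', by linarith⟩
  · rintro ⟨rfl, hc, hc', rfl⟩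
    have hs := ((key (θ - ω)).2 ⟨rfl, hc⟩).1
    have hs' := ((key (θ' - ω)).2 ⟨rfl, hc'⟩).1
    simp [hc, hc', hs, hs']
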